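/- For a differential-drive robot with wheel-speed bound w_max > 0 and half-axle length ρ > 0, starting from any configuration g = (p, θ₀) ∈ ℝ² × ℝ, the area of the small-time reachable set satisfies limsup_{t→0⁺} Area(R_t(g)) / t³ ≤ (5/(6ρ)) w_max³. -/

import Mathlib

open MeasureTheory Filter Topology Real

noncomputable section

/-- The plane `ℝ²` with the Euclidean norm. -/
abbrev Plane : Type := EuclideanSpace ℝ (Fin 2)

/-- A differential-drive (DD) trajectory with wheel-speed bound `wmax` and half-axle
length `ρ`: coordinates `x y θ` driven by measurable wheel-speed controls `wl, wr`
bounded by `wmax`, satisfying (in integral form) `x' = (wl+wr)/2 ⬝ cos θ`,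
`y' = (wl+wr)/2 ⬝ sin θ`, `θ' = (wr - wl)/(2ρ)`. -/
def IsDDTraj (wmax ρ : ℝ) (x y θ : ℝ → ℝ) : Prop :=
  ∃ wl wr : ℝ → ℝ, Measurable wl ∧ Measurable wr ∧
    (∀ t, |wl t| ≤ wmax) ∧ (∀ t, |wr t| ≤ wmax) ∧
    (∀ t, x t = x 0 + ∫ s in (0:ℝ)..t, (wl s + wr s) / 2 * Real.cos (θ s)) ∧
    (∀ t, y t = y 0 + ∫ s in (0:ℝ)..t, (wl s + wr s) / 2 * Real.sin (θ s)) ∧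
    (∀ t, θ t = θ 0 + ∫ s in (0:ℝ)..t, (wr s - wl s) / (2 * ρ))

/-- Minimum travel time of a DD robot from configuration `(p, θ₀)` to the point `q`. -/
def tauDD (wmax ρ : ℝ) (p : Plane) (θ₀ : ℝ) (q : Plane) : ℝ :=
  sInf {T : ℝ | 0 ≤ T ∧ ∃ x y θ : ℝ → ℝ, IsDDTraj wmax ρ x y θ ∧
    x 0 = p 0 ∧ y 0 = p 1 ∧ θ 0 = θ₀ ∧ x T = q 0 ∧ y T = q 1}

/-- Reachable set at time `t` of a DD robot starting at configuration `(p, θ₀)`. -/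
def reachDD (wmax ρ : ℝ) (p : Plane) (θ₀ : ℝ) (t : ℝ) : Set Plane :=
  {q | tauDD wmax ρ p θ₀ q ≤ t}

/-!
With `v = (wl + wr) / 2` and `ω = (wr - wl) / (2ρ)` the wheel bounds read `|v| + ρ |ω| ≤ wmax`.
Along a trajectory of duration `T` put `a = ∫ |v|` and `b = ρ ∫ |ω|`, so `a + b ≤ wmax T`. In the
frame of the initial heading the displacement `(X, Y)` satisfies `|X| ≤ a`, and since the heading
turns by at most `b / ρ`, also `ρ |Y| ≤ a b`. Maximising `a b` under these constraints confines the
endpoint to the region `ρ |Y| ≤ r² / 4 - ((|X| - r / 2)⁺)²` with `r = wmax T`, whose area is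
`5 r³ / (6 ρ)`: a rectangle of area `r³ / (2ρ)` and two parabolic caps of area `r³ / (6ρ)` each.
As `τ_DD` is an infimum, `R_t(g)` lies in a rigid motion of this region for every `r > wmax t`.
-/

open Set

lemma intervalIntegrable_of_abs_le {f : ℝ → ℝ} {C : ℝ} (hf : Measurable f)
    (hC : ∀ s, |f s| ≤ C) (a b : ℝ) : IntervalIntegrable f volume a b :=
  intervalIntegrable_const.mono_fun' hf.aestronglyMeasurable.restrict (Eventually.of_forall hC)

lemma integral_indicator_Ioc_const {a b : ℝ} (c : ℝ) (ha : 0 ≤ a) (t : ℝ) :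
    ∫ s in (0:ℝ)..t, (Ioc a b).indicator (fun _ => c) s = c * max (min t b - a) 0 := by
  rcases le_total 0 t with ht | ht
  · rw [intervalIntegral.integral_of_le ht, integral_indicator_const _ measurableSet_Ioc,
      measureReal_restrict_apply measurableSet_Ioc, Ioc_inter_Ioc, volume_real_Ioc,
      smul_eq_mul, max_eq_left ha, min_comm, mul_comm]
  · rw [intervalIntegral.integral_symm, intervalIntegral.integral_of_le ht,
      integral_indicator_const _ measurableSet_Ioc,
      measureReal_restrict_apply measurableSet_Ioc, Ioc_inter_Ioc, volume_real_Ioc,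
      max_eq_right (sub_nonpos.2 ((min_le_left _ _).trans (ht.trans ha))),
      max_eq_right (sub_nonpos.2 ((min_le_right _ _).trans (ha.trans (le_max_left _ _))))]
    simp

lemma abs_integral_mul_le {v f : ℝ → ℝ} {M T : ℝ} (hT : 0 ≤ T)
    (hv : IntervalIntegrable v volume 0 T) (hf : ∀ s ∈ Icc 0 T, |f s| ≤ M) :
    |∫ s in (0:ℝ)..T, v s * f s| ≤ M * ∫ s in (0:ℝ)..T, |v s| := by
  rw [← intervalIntegral.integral_const_mul, ← Real.norm_eq_abs]
  refine intervalIntegral.norm_integral_le_of_norm_le hT (Eventually.of_forall fun s hs => ?_)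
    (hv.abs.const_mul M)
  rw [Real.norm_eq_abs, abs_mul, mul_comm]
  exact mul_le_mul_of_nonneg_right (hf s (Ioc_subset_Icc_self hs)) (abs_nonneg _)

lemma abs_add_add_abs_sub_le_two_mul {a b c : ℝ} (ha : |a| ≤ c) (hb : |b| ≤ c) :
    |a + b| + |a - b| ≤ 2 * c := by
  rw [abs_le] at ha hb
  rcases abs_cases (a + b) with ⟨h₁, _⟩ | ⟨h₁, _⟩ <;>
    rcases abs_cases (a - b) with ⟨h₂, _⟩ | ⟨h₂, _⟩ <;> linarith

def IsUnicycleTraj (wmax ρ : ℝ) (x y θ : ℝ → ℝ) : Prop :=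
  ∃ v ω : ℝ → ℝ, Measurable v ∧ Measurable ω ∧ (∀ t, |v t| + ρ * |ω t| ≤ wmax) ∧
    (∀ t, x t = x 0 + ∫ s in (0:ℝ)..t, v s * cos (θ s)) ∧
    (∀ t, y t = y 0 + ∫ s in (0:ℝ)..t, v s * sin (θ s)) ∧
    (∀ t, θ t = θ 0 + ∫ s in (0:ℝ)..t, ω s)

lemma isDDTraj_iff_isUnicycleTraj {wmax ρ : ℝ} (hρ : 0 < ρ) {x y θ : ℝ → ℝ} :
    IsDDTraj wmax ρ x y θ ↔ IsUnicycleTraj wmax ρ x y θ := by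
  constructor
  · rintro ⟨wl, wr, hl, hr, hlb, hrb, hx, hy, hθ⟩
    refine ⟨fun s => (wl s + wr s) / 2, fun s => (wr s - wl s) / (2 * ρ), by fun_prop,
      by fun_prop, fun s => ?_, hx, hy, hθ⟩
    have := abs_add_add_abs_sub_le_two_mul (hrb s) (hlb s)
    rw [abs_div, abs_div, abs_of_pos (by positivity : 0 < 2 * ρ), abs_two, add_comm (wl s)]
    field_simp
    linarith
  · rintro ⟨v, ω, hv, hω, hvω, hx, hy, hθ⟩
    have hρω : ∀ s, |ρ * ω s| = ρ * |ω s| := fun s => by rw [abs_mul, abs_of_pos hρ]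
    have hv' : ∀ s, (v s - ρ * ω s + (v s + ρ * ω s)) / 2 = v s := fun s => by ring
    have hω' : ∀ s, (v s + ρ * ω s - (v s - ρ * ω s)) / (2 * ρ) = ω s := fun s => by
      field_simp; ring
    refine ⟨fun s => v s - ρ * ω s, fun s => v s + ρ * ω s, by fun_prop, by fun_prop,
      fun s => (abs_sub _ _).trans (hρω s ▸ hvω s),
      fun s => (abs_add_le _ _).trans (hρω s ▸ hvω s), ?_⟩
    simp only [hv', hω']
    exact ⟨hx, hy, hθ⟩

lemma exists_isUnicycleTraj_turn_then_drive {wmax ρ : ℝ} (hw : 0 < wmax) (hρ : 0 < ρ)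
    (x₀ y₀ θ₀ φ : ℝ) {d : ℝ} (hd : 0 ≤ d) :
    ∃ T, 0 ≤ T ∧ ∃ x y θ : ℝ → ℝ, IsUnicycleTraj wmax ρ x y θ ∧
      x 0 = x₀ ∧ y 0 = y₀ ∧ θ 0 = θ₀ ∧ x T = x₀ + d * cos φ ∧ y T = y₀ + d * sin φ := by
  -- Turn in place during `(0, t₁]`, then drive straight at full speed during `(t₁, T]`. The
  -- coordinates are primitives, so their integral equations hold by construction.
  set t₁ := 1 + ρ * |φ - θ₀| / wmax
  have ht₁ : 0 < t₁ := by positivity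
  set ω₀ := (φ - θ₀) / t₁
  set T := t₁ + d / wmax
  set v := (Ioc t₁ T).indicator fun _ => wmax
  set ω := (Ioc 0 t₁).indicator fun _ => ω₀
  set θ := fun t => θ₀ + ∫ s in (0:ℝ)..t, ω s
  have hθ : ∀ s, t₁ ≤ s → θ s = φ := fun s hs => by
    simp only [θ, ω, integral_indicator_Ioc_const _ le_rfl, min_eq_right hs, sub_zero,
      max_eq_left ht₁.le, ω₀, div_mul_cancel₀ _ ht₁.ne', add_sub_cancel]
  have hρω₀ : ρ * |ω₀| ≤ wmax := by
    have : ρ * |φ - θ₀| = wmax * (t₁ - 1) := by simp only [t₁]; field_simp; ring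
    rw [abs_div, abs_of_pos ht₁, mul_div_assoc', div_le_iff₀ ht₁]
    nlinarith
  have hvω : ∀ s, |v s| + ρ * |ω s| ≤ wmax := fun s => by
    simp only [v, ω, indicator_apply]
    split_ifs with h₁ h₂ h₂
    · exact absurd h₁.1 (not_lt.2 h₂.2)
    · simp [abs_of_pos hw]
    · simpa using hρω₀
    · simpa using hw.le
  have hvθ : ∀ (f : ℝ → ℝ) s, v s * f (θ s) = v s * f φ := fun f s => by
    by_cases hs : s ∈ Ioc t₁ T
    · rw [hθ s hs.1.le]
    · simp [v, indicator_of_notMem hs]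
  have hv_int : ∫ s in (0:ℝ)..T, v s = d := by
    simp only [v, integral_indicator_Ioc_const _ ht₁.le, min_self, T, add_sub_cancel_left,
      max_eq_left (div_nonneg hd hw.le)]
    field_simp
  refine ⟨T, by positivity, fun t => x₀ + ∫ s in (0:ℝ)..t, v s * cos φ,
    fun t => y₀ + ∫ s in (0:ℝ)..t, v s * sin φ, θ,
    ⟨v, ω, measurable_const.indicator measurableSet_Ioc,
      measurable_const.indicator measurableSet_Ioc, hvω, by simp [hvθ cos], by simp [hvθ sin],
      by simp [θ]⟩,
    by simp, by simp, by simp [θ], ?_, ?_⟩ <;>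
  simp only [intervalIntegral.integral_mul_const, hv_int]

def ddArrivalTimes (wmax ρ : ℝ) (p : Plane) (θ₀ : ℝ) (q : Plane) : Set ℝ :=
  {T : ℝ | 0 ≤ T ∧ ∃ x y θ : ℝ → ℝ, IsDDTraj wmax ρ x y θ ∧
    x 0 = p 0 ∧ y 0 = p 1 ∧ θ 0 = θ₀ ∧ x T = q 0 ∧ y T = q 1}

/-- `tauDD` is definitionally the `sInf` of these sets; were one empty, it would take the junk
value `sInf ∅ = 0`. -/
lemma ddArrivalTimes_nonempty {wmax ρ : ℝ} (hw : 0 < wmax) (hρ : 0 < ρ) (p : Plane) (θ₀ : ℝ)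
    (q : Plane) : (ddArrivalTimes wmax ρ p θ₀ q).Nonempty := by
  set z : ℂ := ⟨q 0 - p 0, q 1 - p 1⟩
  obtain ⟨T, hT, x, y, θ, h, hx₀, hy₀, hθ₀, hxT, hyT⟩ :=
    exists_isUnicycleTraj_turn_then_drive hw hρ (p 0) (p 1) θ₀ z.arg (norm_nonneg z)
  refine ⟨T, hT, x, y, θ, (isDDTraj_iff_isUnicycleTraj hρ).2 h, hx₀, hy₀, hθ₀, ?_, ?_⟩
  · rw [hxT, Complex.norm_mul_cos_arg]; simp [z]
  · rw [hyT, Complex.norm_mul_sin_arg]; simp [z]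

lemma body_frame_displacement_eq_integral {v x y θ : ℝ → ℝ}
    (hx : ∀ t, x t = x 0 + ∫ s in (0:ℝ)..t, v s * cos (θ s))
    (hy : ∀ t, y t = y 0 + ∫ s in (0:ℝ)..t, v s * sin (θ s)) {T : ℝ}
    (hcos : IntervalIntegrable (fun s => v s * cos (θ s)) volume 0 T)
    (hsin : IntervalIntegrable (fun s => v s * sin (θ s)) volume 0 T) :
    cos (θ 0) * (x T - x 0) + sin (θ 0) * (y T - y 0)
        = ∫ s in (0:ℝ)..T, v s * cos (θ s - θ 0) ∧
      -sin (θ 0) * (x T - x 0) + cos (θ 0) * (y T - y 0)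
        = ∫ s in (0:ℝ)..T, v s * sin (θ s - θ 0) := by
  rw [hx T, hy T, add_sub_cancel_left, add_sub_cancel_left,
    ← intervalIntegral.integral_const_mul, ← intervalIntegral.integral_const_mul,
    ← intervalIntegral.integral_add (hcos.const_mul _) (hsin.const_mul _),
    ← intervalIntegral.integral_const_mul, ← intervalIntegral.integral_const_mul,
    ← intervalIntegral.integral_add (hcos.const_mul _) (hsin.const_mul _)]
  exact ⟨intervalIntegral.integral_congr fun s _ => by simp only [cos_sub]; ring,
    intervalIntegral.integral_congr fun s _ => by simp only [sin_sub]; ring⟩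

lemma abs_sub_le_integral_abs {θ ω : ℝ → ℝ} (hθ : ∀ t, θ t = θ 0 + ∫ s in (0:ℝ)..t, ω s)
    {T : ℝ} (hω : IntervalIntegrable ω volume 0 T) {s : ℝ} (hs : s ∈ Icc 0 T) :
    |θ s - θ 0| ≤ ∫ u in (0:ℝ)..T, |ω u| := by
  rw [hθ s, add_sub_cancel_left]
  exact (intervalIntegral.abs_integral_le_integral_abs hs.1).trans
    (intervalIntegral.integral_mono_interval le_rfl hs.1 hs.2
      (Eventually.of_forall fun _ => abs_nonneg _) hω.abs)

lemma IsUnicycleTraj.exists_body_displacement_bound {wmax ρ : ℝ} (hρ : 0 < ρ)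
    {x y θ : ℝ → ℝ} (h : IsUnicycleTraj wmax ρ x y θ) {T : ℝ} (hT : 0 ≤ T) :
    ∃ a b, 0 ≤ a ∧ 0 ≤ b ∧ a + b ≤ wmax * T ∧
      |cos (θ 0) * (x T - x 0) + sin (θ 0) * (y T - y 0)| ≤ a ∧
      ρ * |-sin (θ 0) * (x T - x 0) + cos (θ 0) * (y T - y 0)| ≤ a * b := by
  obtain ⟨v, ω, hv, hω, hvω, hx, hy, hθ⟩ := h
  have hvb : ∀ s, |v s| ≤ wmax := fun s => by nlinarith [hvω s, abs_nonneg (ω s)]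
  have hv_int := intervalIntegrable_of_abs_le hv hvb
  have hω_int : ∀ a b, IntervalIntegrable ω volume a b := intervalIntegrable_of_abs_le hω
    (C := wmax / ρ) fun s => by rw [le_div_iff₀ hρ]; nlinarith [hvω s, abs_nonneg (v s)]
  have hθ_cont : Continuous θ := by
    rw [funext hθ]
    exact continuous_const.add (intervalIntegral.continuous_primitive hω_int 0)
  have hvf_int : ∀ f : ℝ → ℝ, Continuous f → (∀ u, |f u| ≤ 1) →
      IntervalIntegrable (fun s => v s * f (θ s)) volume 0 T := fun f hf hf1 =>
    intervalIntegrable_of_abs_le (hv.mul (hf.comp hθ_cont).measurable) (fun s => by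
      rw [Pi.mul_apply, Function.comp_apply, abs_mul]
      exact (mul_le_of_le_one_right (abs_nonneg _) (hf1 _)).trans (hvb s)) 0 T
  obtain ⟨hX, hY⟩ := body_frame_displacement_eq_integral hx hy
    (hvf_int cos continuous_cos abs_cos_le_one) (hvf_int sin continuous_sin abs_sin_le_one)
  refine ⟨∫ s in (0:ℝ)..T, |v s|, ρ * ∫ s in (0:ℝ)..T, |ω s|,
    intervalIntegral.integral_nonneg hT fun _ _ => abs_nonneg _,
    mul_nonneg hρ.le (intervalIntegral.integral_nonneg hT fun _ _ => abs_nonneg _), ?_, ?_, ?_⟩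
  · rw [← intervalIntegral.integral_const_mul, ← intervalIntegral.integral_add
      (hv_int 0 T).abs ((hω_int 0 T).abs.const_mul ρ), mul_comm]
    simpa using intervalIntegral.integral_mono_on hT
      ((hv_int 0 T).abs.add ((hω_int 0 T).abs.const_mul ρ)) intervalIntegrable_const
      fun s _ => hvω s
  · simpa [hX] using abs_integral_mul_le hT (hv_int 0 T) (f := fun s => cos (θ s - θ 0))
      fun s _ => abs_cos_le_one _
  · rw [hY]
    have := abs_integral_mul_le hT (hv_int 0 T) fun s hs =>
      abs_sin_le_abs.trans (abs_sub_le_integral_abs hθ (hω_int 0 T) hs)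
    nlinarith

/-- For `|u| ≤ r`, the maximum of `a b` over `a, b ≥ 0` with `a + b ≤ r` and `|u| ≤ a`. -/
def envelopeHeight (r u : ℝ) : ℝ := r ^ 2 / 4 - max (|u| - r / 2) 0 ^ 2

lemma mul_le_envelopeHeight {a b r u : ℝ} (ha : 0 ≤ a) (hb : 0 ≤ b) (hab : a + b ≤ r)
    (hu : |u| ≤ a) : a * b ≤ envelopeHeight r u := by
  unfold envelopeHeight
  rcases le_total |u| (r / 2) with h | h
  · rw [max_eq_right (by linarith)]
    nlinarith [sq_nonneg (a - b)]
  · rw [max_eq_left (by linarith)]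
    nlinarith [mul_nonneg (sub_nonneg.2 hu) (by linarith : 0 ≤ a + |u| - r)]

lemma continuous_envelopeHeight (r : ℝ) : Continuous (envelopeHeight r) := by
  unfold envelopeHeight; fun_prop

lemma envelopeHeight_neg (r u : ℝ) : envelopeHeight r (-u) = envelopeHeight r u := by
  simp [envelopeHeight]

lemma integral_envelopeHeight {r : ℝ} (hr : 0 ≤ r) :
    ∫ u in -r..r, envelopeHeight r u = 5 / 12 * r ^ 3 := by
  have hint : ∀ a b, IntervalIntegrable (envelopeHeight r) volume a b :=
    (continuous_envelopeHeight r).intervalIntegrable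
  have hcenter : ∫ u in -(r / 2)..r / 2, envelopeHeight r u = r ^ 3 / 4 := by
    refine (intervalIntegral.integral_congr (g := fun _ => r ^ 2 / 4) fun u hu => ?_).trans ?_
    · rw [uIcc_of_le (by linarith), mem_Icc, ← abs_le] at hu
      simp [envelopeHeight, max_eq_right (sub_nonpos.2 hu)]
    · rw [intervalIntegral.integral_const, smul_eq_mul]; ring
  have hright : ∫ u in r / 2..r, envelopeHeight r u = r ^ 3 / 12 := by
    refine (intervalIntegral.integral_congr (g := fun u => r * u - u ^ 2) fun u hu => ?_).trans ?_
    · rw [uIcc_of_le (by linarith), mem_Icc] at hu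
      simp only [envelopeHeight, abs_of_nonneg (by linarith [hu.1] : 0 ≤ u),
        max_eq_left (by linarith [hu.1] : 0 ≤ u - r / 2)]
      ring
    · rw [intervalIntegral.integral_sub ((continuous_const_mul r).intervalIntegrable _ _)
        ((continuous_pow 2).intervalIntegrable _ _), intervalIntegral.integral_const_mul,
        integral_id, integral_pow]
      ring
  have hleft : ∫ u in -r..-(r / 2), envelopeHeight r u = r ^ 3 / 12 := by
    rw [← intervalIntegral.integral_comp_neg]
    simpa only [envelopeHeight_neg] using hright
  rw [← intervalIntegral.integral_add_adjacent_intervals (hint (-r) (-(r / 2))) (hint _ r),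
    ← intervalIntegral.integral_add_adjacent_intervals (hint (-(r / 2)) (r / 2)) (hint _ r),
    hleft, hcenter, hright]
  ring

lemma lintegral_ofReal_envelopeHeight {r : ℝ} (hr : 0 ≤ r) :
    ∫⁻ u, ENNReal.ofReal (envelopeHeight r u) = ENNReal.ofReal (5 / 12 * r ^ 3) := by
  have hsupp : Function.support (fun u => ENNReal.ofReal (envelopeHeight r u)) ⊆ Icc (-r) r := by
    intro u hu
    rw [Function.mem_support, ENNReal.ofReal_ne_zero_iff] at hu
    by_contra h
    have : r < |u| := by rw [mem_Icc, ← abs_le] at h; exact not_le.1 h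
    have : max (|u| - r / 2) 0 = |u| - r / 2 := max_eq_left (by linarith)
    simp only [envelopeHeight, this] at hu
    nlinarith
  rw [← setLIntegral_eq_of_support_subset hsupp, ← ofReal_integral_eq_lintegral_ofReal
    (continuous_envelopeHeight r).integrableOn_Icc, integral_Icc_eq_integral_Ioc,
    ← intervalIntegral.integral_of_le (by linarith), integral_envelopeHeight hr]
  refine (ae_restrict_iff' measurableSet_Icc).2 (Eventually.of_forall fun u hu => ?_)
  rw [mem_Icc, ← abs_le] at hu
  simp only [Pi.zero_apply, envelopeHeight]
  rcases le_total |u| (r / 2) with h | h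
  · rw [max_eq_right (by linarith)]; nlinarith [sq_nonneg r]
  · rw [max_eq_left (by linarith)]; nlinarith

def ddEnvelope (ρ r : ℝ) : Set Plane := {v | ρ * |v 1| ≤ envelopeHeight r (v 0)}

lemma measurableSet_ddEnvelope (ρ r : ℝ) : MeasurableSet (ddEnvelope ρ r) :=
  (isClosed_le (by fun_prop) ((continuous_envelopeHeight r).comp (by fun_prop))).measurableSet

lemma volume_ddEnvelope {ρ r : ℝ} (hρ : 0 < ρ) (hr : 0 ≤ r) :
    volume (ddEnvelope ρ r) = ENNReal.ofReal (5 / (6 * ρ) * r ^ 3) := by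
  set S : Set (ℝ × ℝ) := {z | ρ * |z.2| ≤ envelopeHeight r z.1}
  have hS : MeasurableSet S :=
    (isClosed_le (by fun_prop) ((continuous_envelopeHeight r).comp continuous_fst)).measurableSet
  have hcoord : MeasurePreserving (fun v : Plane => (v 0, v 1)) :=
    (volume_preserving_piFinTwo fun _ => ℝ).comp
      (EuclideanSpace.volume_preserving_symm_measurableEquiv_toLp (Fin 2))
  have hslice : ∀ u,
      Prod.mk u ⁻¹' S = Icc (-(envelopeHeight r u / ρ)) (envelopeHeight r u / ρ) := by
    intro u
    ext z
    change ρ * |z| ≤ _ ↔ _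
    rw [mem_Icc, ← abs_le, le_div_iff₀ hρ, mul_comm]
  rw [show ddEnvelope ρ r = (fun v : Plane => (v 0, v 1)) ⁻¹' S from rfl,
    hcoord.measure_preimage hS.nullMeasurableSet, Measure.volume_eq_prod, Measure.prod_apply hS]
  have hcoef : ∀ u, envelopeHeight r u / ρ - -(envelopeHeight r u / ρ)
      = 2 / ρ * envelopeHeight r u := fun u => by ring
  simp only [hslice, Real.volume_Icc, hcoef, ENNReal.ofReal_mul (by positivity : 0 ≤ 2 / ρ)]
  rw [lintegral_const_mul' _ _ ENNReal.ofReal_ne_top, lintegral_ofReal_envelopeHeight hr,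
    ← ENNReal.ofReal_mul (by positivity)]
  congr 1
  field_simp
  ring

def planeRotation (θ : ℝ) : Plane ≃ₗᵢ[ℝ] Plane :=
  (Complex.orthonormalBasisOneI.repr.symm.trans (rotation (Circle.exp θ))).trans
    Complex.orthonormalBasisOneI.repr

lemma planeRotation_apply_zero (θ : ℝ) (v : Plane) :
    planeRotation θ v 0 = cos θ * v 0 - sin θ * v 1 := by
  simp [planeRotation, Complex.orthonormalBasisOneI_repr_apply, -Complex.ofReal_cos]

lemma planeRotation_apply_one (θ : ℝ) (v : Plane) :
    planeRotation θ v 1 = sin θ * v 0 + cos θ * v 1 := by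
  simp [planeRotation, Complex.orthonormalBasisOneI_repr_apply, add_comm]

lemma planeRotation_sub_mem_ddEnvelope {wmax ρ : ℝ} (hw : 0 < wmax) (hρ : 0 < ρ) {p : Plane}
    {θ₀ t r : ℝ} {q : Plane} (hq : q ∈ reachDD wmax ρ p θ₀ t) (htr : wmax * t < r) :
    planeRotation (-θ₀) (q - p) ∈ ddEnvelope ρ r := by
  have hlt : sInf (ddArrivalTimes wmax ρ p θ₀ q) < r / wmax :=
    (show tauDD wmax ρ p θ₀ q ≤ t from hq).trans_lt ((lt_div_iff₀' hw).2 htr)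
  rw [csInf_lt_iff ⟨0, fun T hT => hT.1⟩ (ddArrivalTimes_nonempty hw hρ p θ₀ q)]
    at hlt
  obtain ⟨T, ⟨hT, x, y, θ, h, hx₀, hy₀, hθ₀, hxT, hyT⟩, hTr⟩ := hlt
  obtain ⟨a, b, ha, hb, hab, hX, hY⟩ :=
    ((isDDTraj_iff_isUnicycleTraj hρ).1 h).exists_body_displacement_bound hρ hT
  rw [hx₀, hy₀, hθ₀, hxT, hyT] at hX hY
  have hbound := mul_le_envelopeHeight ha hb (hab.trans ((lt_div_iff₀' hw).1 hTr).le) hX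
  simp only [neg_mul] at hY
  simp only [ddEnvelope, mem_ofPred_eq, planeRotation_apply_zero, planeRotation_apply_one,
    cos_neg, sin_neg, PiLp.sub_apply, neg_mul, sub_neg_eq_add]
  exact hY.trans hbound

lemma volume_reachDD_le {wmax ρ : ℝ} (hw : 0 < wmax) (hρ : 0 < ρ) (p : Plane) (θ₀ : ℝ)
    {t : ℝ} (ht : 0 ≤ t) :
    volume (reachDD wmax ρ p θ₀ t) ≤ ENNReal.ofReal (5 / (6 * ρ) * (wmax * t) ^ 3) := by
  have hframe : MeasurePreserving (fun q => planeRotation (-θ₀) (q - p)) :=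
    (planeRotation (-θ₀)).measurePreserving.comp (measurePreserving_sub_right volume p)
  have hle : ∀ r, wmax * t < r →
      volume (reachDD wmax ρ p θ₀ t) ≤ ENNReal.ofReal (5 / (6 * ρ) * r ^ 3) := fun r hr =>
    calc volume (reachDD wmax ρ p θ₀ t)
        ≤ volume ((fun q => planeRotation (-θ₀) (q - p)) ⁻¹' ddEnvelope ρ r) :=
          measure_mono fun q hq => planeRotation_sub_mem_ddEnvelope hw hρ hq hr
      _ = ENNReal.ofReal (5 / (6 * ρ) * r ^ 3) := by
          rw [hframe.measure_preimage (measurableSet_ddEnvelope ρ r).nullMeasurableSet,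
            volume_ddEnvelope hρ ((by positivity : 0 ≤ wmax * t).trans hr.le)]
  refine ge_of_tendsto (x := 𝓝[>] (wmax * t)) ?_ (eventually_nhdsWithin_of_forall hle)
  exact (ENNReal.continuous_ofReal.tendsto _).comp
    ((Continuous.tendsto (by fun_prop) _).mono_left nhdsWithin_le_nhds)

/-- small-time upper bound on the area of the reachable set of a DD robot:
`limsup_{t→0⁺} Area(R_t(g)) / t³ ≤ (5/(6ρ)) w_max³`. -/
theorem dd_reachable_area_upper_bound
    (wmax ρ : ℝ) (hw : 0 < wmax) (hρ : 0 < ρ) (p : Plane) (θ₀ : ℝ) :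
    Filter.limsup
      (fun t : ℝ => volume (reachDD wmax ρ p θ₀ t) / ENNReal.ofReal (t ^ 3))
      (𝓝[>] 0) ≤ ENNReal.ofReal (5 / (6 * ρ) * wmax ^ 3) := by
  refine limsup_le_of_le (by isBoundedDefault) (eventually_nhdsWithin_of_forall fun t ht => ?_)
  refine ENNReal.div_le_of_le_mul ((volume_reachDD_le hw hρ p θ₀ (le_of_lt ht)).trans_eq ?_)
  rw [← ENNReal.ofReal_mul (by positivity)]
  ring_nf
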